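/- Let Q be a finite quiver with a source i, and let Q' be the quiver obtained from Q by reversing all arrows incident to i (so i is a sink of Q'). The BGP reflection functor at i induces an equivalence between the full subcategory of finite-dimensional representations M of Q' with ⊕_{a: j→i} M_j → M_i surjective (equivalently Hom(M, S_i) = 0) and the full subcategory of finite-dimensional representations N of Q with M_i → ⊕_{a: i→j} N_j injective (equivalently Hom(S_i, N) = 0). -/

import Mathlib

open CategoryTheory

/-- A representation of the quiver on vertex set `Q` with arrow sets `E a b` over a
field `k`. -/
structure QvRep (k : Type) [Field k] (Q : Type) (E : Q → Q → Type) where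
  V : Q → Type
  [acg : ∀ q, AddCommGroup (V q)]
  [mod : ∀ q, Module k (V q)]
  map : ∀ {a b : Q}, E a b → (V a →ₗ[k] V b)

attribute [instance] QvRep.acg QvRep.mod

/-- A morphism of representations. -/
structure QvHom {k : Type} [Field k] {Q : Type} {E : Q → Q → Type} (M N : QvRep k Q E) where
  app : ∀ q, M.V q →ₗ[k] N.V q
  comm : ∀ {a b : Q} (f : E a b), (app b).comp (M.map f) = (N.map f).comp (app a)

theorem QvHom.ext' {k : Type} [Field k] {Q : Type} {E : Q → Q → Type} {M N : QvRep k Q E}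
    {φ ψ : QvHom M N} (h : φ.app = ψ.app) : φ = ψ := by
  cases φ; cases ψ; cases h; rfl

/-- The category of representations. -/
instance {k : Type} [Field k] {Q : Type} {E : Q → Q → Type} : Category (QvRep k Q E) where
  Hom := QvHom
  id M := ⟨fun _ => LinearMap.id, fun {a b} f => by
    rw [LinearMap.comp_id, LinearMap.id_comp]⟩
  comp φ ψ := ⟨fun q => (ψ.app q).comp (φ.app q), fun {a b} f => by
    ext x
    have h1 := LinearMap.congr_fun (φ.comm f) x
    have h2 := LinearMap.congr_fun (ψ.comm f) (φ.app a x)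
    simp only [LinearMap.comp_apply] at h1 h2 ⊢
    rw [h1, h2]⟩
  id_comp φ := QvHom.ext' (funext fun q => LinearMap.comp_id _)
  comp_id φ := QvHom.ext' (funext fun q => LinearMap.id_comp _)
  assoc φ ψ χ := QvHom.ext' (funext fun q => (LinearMap.comp_assoc _ _ _).symm)

/-- The quiver obtained by reversing all arrows incident to the vertex `i`. -/
def revE {Q : Type} [DecidableEq Q] (E : Q → Q → Type) (i : Q) : Q → Q → Type :=
  fun a b => if a = i ∨ b = i then E b a else E a b

instance {Q : Type} [DecidableEq Q] (E : Q → Q → Type) [∀ a b, Fintype (E a b)] (i a b : Q) :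
    Fintype (revE E i a b) := by
  unfold revE; split <;> infer_instance

/-- The canonical map `⊕_{a : j → i} M_j → M_i`. -/
noncomputable def canIn {k : Type} [Field k] {Q : Type} [Fintype Q] [DecidableEq Q]
    {E : Q → Q → Type} [∀ a b, Fintype (E a b)] (M : QvRep k Q E) (i : Q) :
    (∀ p : Σ j : Q, E j i, M.V p.1) →ₗ[k] M.V i :=
  ∑ p : Σ j : Q, E j i,
    (M.map p.2).comp (LinearMap.proj (φ := fun p : Σ j : Q, E j i => M.V p.1) p)

/-- The canonical map `N_i → ⊕_{a : i → j} N_j`. -/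
def canOut {k : Type} [Field k] {Q : Type} {E : Q → Q → Type} (N : QvRep k Q E) (i : Q) :
    N.V i →ₗ[k] ∀ p : Σ j : Q, E i j, N.V p.1 :=
  LinearMap.pi fun p => N.map p.2

/-! Away from `i` the reflections `Φ⁺` (kernel at the sink `i` of `Q'`) and `Φ⁻` (cokernel at
the source `i` of `Q`) change nothing, so a morphism `Φ⁺M ⟶ Φ⁺M'` already gives the components
of a morphism `M ⟶ M'` off `i`. When `⊕ M_j → M_i` is onto, the component at `i` is forced, and
it exists because the given morphism carries `ker (⊕ M_j → M_i)` into `ker (⊕ M'_j → M'_i)`: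
so `Φ⁺` is fully faithful. When `N_i → ⊕ N_j` is one-to-one, `Φ⁻N` has an onto incoming map at
`i`, and `Φ⁺Φ⁻N` has at `i` the kernel of `⊕ N_j → coker`, that is the image of `N_i`, which is
`N_i` again: so `Φ⁺` is essentially surjective. -/

theorem LinearMap.exists_comp_eq_of_surjective {R M M₂ M₃ : Type*} [Ring R] [AddCommGroup M]
    [Module R M] [AddCommGroup M₂] [Module R M₂] [AddCommGroup M₃] [Module R M₃]
    {f : M →ₗ[R] M₂} {g : M →ₗ[R] M₃} (hf : Function.Surjective f)
    (h : LinearMap.ker f ≤ LinearMap.ker g) : ∃ φ : M₂ →ₗ[R] M₃, φ ∘ₗ f = g :=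
  ⟨(LinearMap.ker f).liftQ g h ∘ₗ (f.quotKerEquivOfSurjective hf).symm, by ext x; simp⟩

namespace BGP

section IteSpace

variable (R : Type*) [Semiring R] (P : Prop) (A B : Type*) [AddCommMonoid A] [Module R A]
  [AddCommMonoid B] [Module R B]

/-- `A × 0` if `P` holds and `0 × B` otherwise; it stands in for the type `if P then A else B`,
so that the vertex spaces of a reflected representation need no casts. -/
def iteSpace : Submodule R (A × B) where
  carrier := {x | (P → x.2 = 0) ∧ (¬P → x.1 = 0)}
  add_mem' hx hy := ⟨fun h => by simp [hx.1 h, hy.1 h], fun h => by simp [hx.2 h, hy.2 h]⟩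
  zero_mem' := ⟨fun _ => rfl, fun _ => rfl⟩
  smul_mem' c x hx := ⟨fun h => by simp [hx.1 h], fun h => by simp [hx.2 h]⟩

namespace iteSpace

variable {R P A B}

theorem snd_eq_zero (x : iteSpace R P A B) (h : P) : (x : A × B).2 = 0 := x.2.1 h

theorem fst_eq_zero (x : iteSpace R P A B) (h : ¬P) : (x : A × B).1 = 0 := x.2.2 h

def fst : iteSpace R P A B →ₗ[R] A := LinearMap.fst R A B ∘ₗ (iteSpace R P A B).subtype

def snd : iteSpace R P A B →ₗ[R] B := LinearMap.snd R A B ∘ₗ (iteSpace R P A B).subtype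

def inl (h : P) : A →ₗ[R] iteSpace R P A B :=
  (LinearMap.inl R A B).codRestrict _ fun _ => ⟨fun _ => rfl, fun h' => absurd h h'⟩

def inr (h : ¬P) : B →ₗ[R] iteSpace R P A B :=
  (LinearMap.inr R A B).codRestrict _ fun _ => ⟨fun h' => absurd h' h, fun _ => rfl⟩

theorem ext_of_pos (h : P) {x y : iteSpace R P A B} (hxy : (x : A × B).1 = (y : A × B).1) :
    x = y :=
  Subtype.ext (Prod.ext hxy (by rw [snd_eq_zero x h, snd_eq_zero y h]))

theorem ext_of_neg (h : ¬P) {x y : iteSpace R P A B} (hxy : (x : A × B).2 = (y : A × B).2) :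
    x = y :=
  Subtype.ext (Prod.ext (by rw [fst_eq_zero x h, fst_eq_zero y h]) hxy)

theorem inl_fst (h : P) (x : iteSpace R P A B) : inl h (x : A × B).1 = x :=
  ext_of_pos h rfl

theorem inr_snd (h : ¬P) (x : iteSpace R P A B) : inr h (x : A × B).2 = x :=
  ext_of_neg h rfl

def equivOfPos (h : P) : iteSpace R P A B ≃ₗ[R] A :=
  { (fst : iteSpace R P A B →ₗ[R] A) with
    invFun := inl h
    left_inv := inl_fst h
    right_inv := fun _ => rfl }

def equivOfNeg (h : ¬P) : iteSpace R P A B ≃ₗ[R] B :=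
  { (snd : iteSpace R P A B →ₗ[R] B) with
    invFun := inr h
    left_inv := inr_snd h
    right_inv := fun _ => rfl }

variable {A' B' : Type*} [AddCommMonoid A'] [Module R A'] [AddCommMonoid B'] [Module R B']

def map (f : A →ₗ[R] A') (g : B →ₗ[R] B') : iteSpace R P A B →ₗ[R] iteSpace R P A' B' :=
  (f.prodMap g ∘ₗ (iteSpace R P A B).subtype).codRestrict _ fun x =>
    ⟨fun h => by simp [snd_eq_zero x h], fun h => by simp [fst_eq_zero x h]⟩

end iteSpace

end IteSpace

variable {k : Type} [Field k] {Q : Type} {E : Q → Q → Type}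

section Rep

theorem map_app_apply {M N : QvRep k Q E} (φ : M ⟶ N) {a b : Q} (e : E a b) (v : M.V a) :
    φ.app b (M.map e v) = N.map e (φ.app a v) :=
  LinearMap.congr_fun (φ.comm e) v

def updateAt {β : Q → Type*} [DecidableEq Q] (i : Q) (f : ∀ j, j ≠ i → β j) (g : β i) :
    ∀ j, β j :=
  fun j => if hj : j = i then hj ▸ g else f j hj

@[simp] theorem updateAt_self {β : Q → Type*} [DecidableEq Q] (i : Q) (f : ∀ j, j ≠ i → β j)
    (g : β i) : updateAt i f g i = g :=
  dif_pos rfl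

theorem updateAt_of_ne {β : Q → Type*} [DecidableEq Q] {i j : Q} (hj : j ≠ i)
    (f : ∀ j, j ≠ i → β j) (g : β i) : updateAt i f g j = f j hj :=
  dif_neg hj

noncomputable def isoOfBijective {M N : QvRep k Q E} (φ : M ⟶ N)
    (hφ : ∀ q, Function.Bijective (φ.app q)) : M ≅ N where
  hom := φ
  inv :=
    { app := fun q => (LinearEquiv.ofBijective (φ.app q) (hφ q)).symm.toLinearMap
      comm := fun {a b} e => LinearMap.ext fun y => (hφ b).1 <| by
        have h q (v : N.V q) : φ.app q ((LinearEquiv.ofBijective _ (hφ q)).symm v) = v :=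
          (LinearEquiv.ofBijective _ (hφ q)).apply_symm_apply v
        simp only [LinearMap.comp_apply, LinearEquiv.coe_coe, map_app_apply, h] }
  hom_inv_id := QvHom.ext' <| funext fun q => LinearMap.ext fun v =>
    (LinearEquiv.ofBijective (φ.app q) (hφ q)).symm_apply_apply v
  inv_hom_id := QvHom.ext' <| funext fun q => LinearMap.ext fun v =>
    (LinearEquiv.ofBijective (φ.app q) (hφ q)).apply_symm_apply v

variable [Fintype Q] [DecidableEq Q] [∀ a b, Fintype (E a b)]

theorem canIn_apply (M : QvRep k Q E) (j : Q) (x : ∀ p : Σ l : Q, E l j, M.V p.1) :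
    canIn M j x = ∑ p : Σ l : Q, E l j, M.map p.2 (x p) := by
  simp [canIn]

theorem canIn_single (M : QvRep k Q E) (j : Q) [DecidableEq (Σ l : Q, E l j)]
    (p : Σ l : Q, E l j) (v : M.V p.1) : canIn M j (Pi.single p v) = M.map p.2 v := by
  rw [canIn_apply, Finset.sum_eq_single p (fun q _ hq => by simp [hq]) (by simp)]
  simp

theorem canIn_piMap {M N : QvRep k Q E} (φ : M ⟶ N) (j : Q)
    (x : ∀ p : Σ l : Q, E l j, M.V p.1) :
    canIn N j (LinearMap.piMap (fun p => φ.app p.1) x) = φ.app j (canIn M j x) := by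
  simp [canIn_apply, map_app_apply]

theorem comm_of_canIn {M N : QvRep k Q E} (φ : ∀ j, M.V j →ₗ[k] N.V j) {i : Q}
    (h : ∀ x, φ i (canIn M i x) = canIn N i (LinearMap.piMap (fun p => φ p.1) x))
    {a : Q} (e : E a i) : φ i ∘ₗ M.map e = N.map e ∘ₗ φ a := by
  classical
  ext v
  rw [LinearMap.comp_apply, ← canIn_single M i ⟨a, e⟩, h, LinearMap.comp_apply,
    ← canIn_single N i ⟨a, e⟩]
  congr 1
  funext p
  exact Pi.apply_single (fun p => φ p.1) (fun _ => map_zero _) (⟨a, e⟩ : Σ l, E l i) v p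

theorem hom_ext_of_canIn_surjective {M N : QvRep k Q E} {i : Q} [IsEmpty (E i i)]
    (hM : Function.Surjective (canIn M i)) {φ ψ : M ⟶ N}
    (h : ∀ j, j ≠ i → φ.app j = ψ.app j) : φ = ψ := by
  have hpi : LinearMap.piMap (fun p : Σ l, E l i => φ.app p.1) =
      LinearMap.piMap (fun p => ψ.app p.1) := by
    congr 1
    funext p
    exact h _ fun hp => IsEmpty.false (hp ▸ p.2)
  refine QvHom.ext' (funext fun j => ?_)
  by_cases hj : j = i
  · subst hj
    ext v
    obtain ⟨x, rfl⟩ := hM v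
    rw [← canIn_piMap, ← canIn_piMap, hpi]
  · exact h j hj

end Rep

theorem ne_of_source {i : Q} (hs : ∀ j, IsEmpty (E j i)) {a b : Q} (e : E a b) : b ≠ i := by
  rintro rfl
  exact (hs a).false e

section Reverse

variable [DecidableEq Q] {i : Q}

theorem revE_of_incident {a b : Q} (h : a = i ∨ b = i) : revE E i a b = E b a := if_pos h

theorem revE_of_ne {a b : Q} (ha : a ≠ i) (hb : b ≠ i) : revE E i a b = E a b :=
  if_neg (by tauto)

def reverseArrow {a b : Q} (h : a = i ∨ b = i) : E b a ≃ revE E i a b :=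
  Equiv.cast (revE_of_incident h).symm

def keepArrow {a b : Q} (ha : a ≠ i) (hb : b ≠ i) : E a b ≃ revE E i a b :=
  Equiv.cast (revE_of_ne ha hb).symm

theorem ne_of_revE_sink (hs : ∀ j, IsEmpty (E j i)) {j : Q} (e : revE E i j i) : j ≠ i :=
  ne_of_source hs ((reverseArrow (Or.inr rfl)).symm e)

end Reverse

section ReflPlus

variable [Fintype Q] [DecidableEq Q] [∀ a b, Fintype (E a b)] {i : Q}

section ReflPlusObj

noncomputable abbrev reflPlusSpace (M : QvRep k Q (revE E i)) (j : Q) :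
    Submodule k (LinearMap.ker (canIn M j) × M.V j) :=
  iteSpace k (j = i) (LinearMap.ker (canIn M j)) (M.V j)

/-- Arrows into `i` get the zero map; `i` being a source of `Q`, there are none. -/
noncomputable def reflPlusMap (M : QvRep k Q (revE E i)) {a b : Q} (e : E a b) :
    reflPlusSpace M a →ₗ[k] reflPlusSpace M b :=
  if hb : b = i then 0
  else if ha : a = i then
    iteSpace.inr hb ∘ₗ
      LinearMap.proj (φ := fun p : Σ l, revE E i l a => M.V p.1)
        ⟨b, reverseArrow (Or.inr ha) e⟩ ∘ₗ
      (LinearMap.ker (canIn M a)).subtype ∘ₗ iteSpace.fst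
  else iteSpace.inr hb ∘ₗ M.map (keepArrow ha hb e) ∘ₗ iteSpace.snd

noncomputable def reflPlus (M : QvRep k Q (revE E i)) : QvRep k Q E where
  V j := reflPlusSpace M j
  map e := reflPlusMap M e

noncomputable def reflPlusEquivOfNe (M : QvRep k Q (revE E i)) {j : Q} (hj : j ≠ i) :
    (reflPlus M).V j ≃ₗ[k] M.V j :=
  iteSpace.equivOfNeg hj

noncomputable def reflPlusEquivKer (M : QvRep k Q (revE E i)) :
    (reflPlus M).V i ≃ₗ[k] LinearMap.ker (canIn M i) :=
  iteSpace.equivOfPos rfl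

variable (M : QvRep k Q (revE E i))

theorem reflPlus_map_eq_zero {a : Q} (e : E a i) : (reflPlus M).map e = 0 :=
  dif_pos rfl

theorem reflPlus_map_source {b : Q} (hb : b ≠ i) (e : E i b) (x : (reflPlus M).V i) :
    reflPlusEquivOfNe M hb ((reflPlus M).map e x) =
      (reflPlusEquivKer M x : ∀ p : Σ l, revE E i l i, M.V p.1)
        ⟨b, reverseArrow (Or.inr rfl) e⟩ := by
  show reflPlusEquivOfNe M hb (reflPlusMap M e x) = _
  rw [reflPlusMap, dif_neg hb, dif_pos rfl]
  rfl

theorem reflPlus_map_of_ne {a b : Q} (ha : a ≠ i) (hb : b ≠ i) (e : E a b)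
    (x : (reflPlus M).V a) :
    reflPlusEquivOfNe M hb ((reflPlus M).map e x) =
      M.map (keepArrow ha hb e) (reflPlusEquivOfNe M ha x) := by
  show reflPlusEquivOfNe M hb (reflPlusMap M e x) = _
  rw [reflPlusMap, dif_neg hb, dif_neg ha]
  rfl

end ReflPlusObj

section ReflPlusHom

variable {M M' : QvRep k Q (revE E i)}

theorem piMap_mem_ker_canIn (φ : M ⟶ M') {j : Q} {x : ∀ p : Σ l, revE E i l j, M.V p.1}
    (hx : x ∈ LinearMap.ker (canIn M j)) :
    LinearMap.piMap (fun p => φ.app p.1) x ∈ LinearMap.ker (canIn M' j) := by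
  rw [LinearMap.mem_ker, canIn_piMap, LinearMap.mem_ker.mp hx, map_zero]

noncomputable def reflPlusHomApp (φ : M ⟶ M') (j : Q) :
    (reflPlus M).V j →ₗ[k] (reflPlus M').V j :=
  iteSpace.map ((LinearMap.piMap fun p => φ.app p.1).restrict fun _ => piMap_mem_ker_canIn φ)
    (φ.app j)

@[simp] theorem reflPlusEquivOfNe_homApp (φ : M ⟶ M') {j : Q} (hj : j ≠ i)
    (x : (reflPlus M).V j) :
    reflPlusEquivOfNe M' hj (reflPlusHomApp φ j x) = φ.app j (reflPlusEquivOfNe M hj x) :=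
  rfl

@[simp] theorem reflPlusEquivKer_homApp (φ : M ⟶ M') (x : (reflPlus M).V i) :
    (reflPlusEquivKer M' (reflPlusHomApp φ i x) : ∀ p : Σ l, revE E i l i, M'.V p.1) =
      LinearMap.piMap (fun p => φ.app p.1) (reflPlusEquivKer M x) :=
  rfl

theorem reflPlusHomApp_comm (φ : M ⟶ M') {a b : Q} (e : E a b) :
    reflPlusHomApp φ b ∘ₗ (reflPlus M).map e = (reflPlus M').map e ∘ₗ reflPlusHomApp φ a := by
  by_cases hb : b = i
  · subst hb
    simp [reflPlus_map_eq_zero]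
  ext x
  apply (reflPlusEquivOfNe M' hb).injective
  by_cases ha : a = i
  · subst ha
    simp [reflPlus_map_source _ hb]
  · simp [reflPlus_map_of_ne _ ha hb, map_app_apply]

noncomputable def reflPlusHom (φ : M ⟶ M') : reflPlus M ⟶ reflPlus M' :=
  ⟨reflPlusHomApp φ, reflPlusHomApp_comm φ⟩

@[simp] theorem reflPlusHom_app (φ : M ⟶ M') (j : Q) :
    (reflPlusHom φ).app j = reflPlusHomApp φ j :=
  rfl

end ReflPlusHom

variable (k E i) in
noncomputable def reflPlusFunctor : QvRep k Q (revE E i) ⥤ QvRep k Q E where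
  obj := reflPlus
  map := reflPlusHom
  map_id _ := QvHom.ext' <| funext fun _ => LinearMap.ext fun _ => rfl
  map_comp _ _ := QvHom.ext' <| funext fun _ => LinearMap.ext fun _ => rfl

section FullyFaithful

theorem finiteDimensional_reflPlus {M : QvRep k Q (revE E i)}
    (hM : ∀ q, FiniteDimensional k (M.V q)) (q : Q) : FiniteDimensional k ((reflPlus M).V q) :=
  inferInstanceAs (FiniteDimensional k (reflPlusSpace M q))

theorem canOut_reflPlus_injective (hs : ∀ j, IsEmpty (E j i)) (M : QvRep k Q (revE E i)) :
    Function.Injective (canOut (reflPlus M) i) := by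
  intro x y hxy
  apply (reflPlusEquivKer M).injective
  ext ⟨j, e'⟩
  have hj := ne_of_revE_sink hs e'
  have h := congrArg (reflPlusEquivOfNe M hj)
    (congrFun hxy ⟨j, (reverseArrow (Or.inr rfl)).symm e'⟩)
  rwa [canOut, LinearMap.pi_apply, LinearMap.pi_apply, reflPlus_map_source _ hj,
    reflPlus_map_source _ hj, Equiv.apply_symm_apply] at h

variable {M M' : QvRep k Q (revE E i)}

theorem reflPlusHom_injective (hs : ∀ j, IsEmpty (E j i))
    (hM : Function.Surjective (canIn M i)) :
    Function.Injective (reflPlusHom : (M ⟶ M') → (reflPlus M ⟶ reflPlus M')) := by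
  intro φ φ' h
  have : IsEmpty (revE E i i i) := ⟨fun e => ne_of_revE_sink hs e rfl⟩
  refine hom_ext_of_canIn_surjective hM fun j hj => LinearMap.ext fun v => ?_
  have := congrArg (fun ψ : reflPlus M ⟶ reflPlus M' =>
    reflPlusEquivOfNe M' hj (ψ.app j ((reflPlusEquivOfNe M hj).symm v))) h
  simpa [reflPlusHom] using this

noncomputable def offSinkApp (ψ : reflPlus M ⟶ reflPlus M') (j : Q) (hj : j ≠ i) :
    M.V j →ₗ[k] M'.V j :=
  (reflPlusEquivOfNe M hj).arrowCongr (reflPlusEquivOfNe M' hj) (ψ.app j)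

theorem reflPlusEquivKer_app (hs : ∀ j, IsEmpty (E j i)) (ψ : reflPlus M ⟶ reflPlus M')
    (w : (reflPlus M).V i) :
    (reflPlusEquivKer M' (ψ.app i w) : ∀ p : Σ l, revE E i l i, M'.V p.1) =
      LinearMap.piMap (fun p => offSinkApp ψ p.1 (ne_of_revE_sink hs p.2))
        (reflPlusEquivKer M w) := by
  funext ⟨j, e'⟩
  have hj := ne_of_revE_sink hs e'
  set e := (reverseArrow (Or.inr rfl)).symm e'
  have hw : (reflPlusEquivOfNe M hj).symm
      ((reflPlusEquivKer M w : ∀ p : Σ l, revE E i l i, M.V p.1) ⟨j, e'⟩) =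
        (reflPlus M).map e w := by
    rw [LinearEquiv.symm_apply_eq, reflPlus_map_source _ hj, Equiv.apply_symm_apply]
  have h := congrArg (reflPlusEquivOfNe M' hj) (map_app_apply ψ e w)
  rw [reflPlus_map_source _ hj, Equiv.apply_symm_apply] at h
  simp [offSinkApp, hw, h]

theorem offSinkApp_comm (ψ : reflPlus M ⟶ reflPlus M') {a b : Q} (ha : a ≠ i) (hb : b ≠ i)
    (e' : revE E i a b) :
    offSinkApp ψ b hb ∘ₗ M.map e' = M'.map e' ∘ₗ offSinkApp ψ a ha := by
  ext v
  have hv : (reflPlusEquivOfNe M hb).symm (M.map e' v) =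
      (reflPlus M).map ((keepArrow ha hb).symm e') ((reflPlusEquivOfNe M ha).symm v) := by
    rw [LinearEquiv.symm_apply_eq, reflPlus_map_of_ne _ ha hb, Equiv.apply_symm_apply,
      LinearEquiv.apply_symm_apply]
  simp only [LinearMap.comp_apply, offSinkApp, LinearEquiv.arrowCongr_apply, hv,
    map_app_apply, reflPlus_map_of_ne _ ha hb, Equiv.apply_symm_apply]

theorem ker_canIn_le_ker_offSinkApp (hs : ∀ j, IsEmpty (E j i)) (ψ : reflPlus M ⟶ reflPlus M') :
    LinearMap.ker (canIn M i) ≤ LinearMap.ker (canIn M' i ∘ₗ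
      LinearMap.piMap fun p => offSinkApp ψ p.1 (ne_of_revE_sink hs p.2)) := by
  intro x hx
  have := (reflPlusEquivKer M' (ψ.app i ((reflPlusEquivKer M).symm ⟨x, hx⟩))).2
  rwa [reflPlusEquivKer_app hs, LinearEquiv.apply_symm_apply] at this

theorem exists_reflPlusHom_eq (hs : ∀ j, IsEmpty (E j i)) (hM : Function.Surjective (canIn M i))
    (ψ : reflPlus M ⟶ reflPlus M') : ∃ φ : M ⟶ M', reflPlusHom φ = ψ := by
  obtain ⟨φi, hφi⟩ :=
    LinearMap.exists_comp_eq_of_surjective hM (ker_canIn_le_ker_offSinkApp hs ψ)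
  obtain ⟨φ, hφ_self, hφ_ne⟩ : ∃ φ : ∀ j, M.V j →ₗ[k] M'.V j,
      φ i = φi ∧ ∀ j (hj : j ≠ i), φ j = offSinkApp ψ j hj :=
    ⟨updateAt i (offSinkApp ψ) φi, updateAt_self _ _ _, fun _ hj => updateAt_of_ne hj _ _⟩
  have hoff : LinearMap.piMap (fun p : Σ l, revE E i l i => φ p.1) =
      LinearMap.piMap fun p => offSinkApp ψ p.1 (ne_of_revE_sink hs p.2) := by
    congr 1
    funext p
    exact hφ_ne _ _
  have hcomm {a b : Q} (e' : revE E i a b) : φ b ∘ₗ M.map e' = M'.map e' ∘ₗ φ a := by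
    by_cases hb : b = i
    · subst hb
      refine comm_of_canIn φ (fun x => ?_) e'
      rw [hoff, hφ_self, ← LinearMap.comp_apply, hφi]
      rfl
    by_cases ha : a = i
    · subst ha
      exact ((hs b).false ((reverseArrow (Or.inl rfl)).symm e')).elim
    rw [hφ_ne b hb, hφ_ne a ha]
    exact offSinkApp_comm ψ ha hb e'
  refine ⟨⟨φ, hcomm⟩, QvHom.ext' (funext fun j => LinearMap.ext fun w => ?_)⟩
  by_cases hj : j = i
  · subst hj
    apply (reflPlusEquivKer M').injective
    ext1
    rw [reflPlusEquivKer_app hs ψ, ← hoff]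
    rfl
  · apply (reflPlusEquivOfNe M' hj).injective
    rw [reflPlusHom_app, reflPlusEquivOfNe_homApp]
    change φ j _ = _
    rw [hφ_ne j hj, offSinkApp, LinearEquiv.arrowCongr_apply, LinearEquiv.symm_apply_apply]

end FullyFaithful

end ReflPlus

section ReflMinus

variable [DecidableEq Q]

noncomputable abbrev reflMinusSpace (N : QvRep k Q E) (i j : Q) :
    Submodule k (((∀ p : Σ l, E j l, N.V p.1) ⧸ LinearMap.range (canOut N j)) × N.V j) :=
  iteSpace k (j = i) _ (N.V j)

open scoped Classical in
/-- Arrows out of `i` get the zero map; they would be reversed arrows into the source `i` of `Q`,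
and there are none. -/
noncomputable def reflMinusMap (N : QvRep k Q E) (i : Q) {a b : Q} (e' : revE E i a b) :
    reflMinusSpace N i a →ₗ[k] reflMinusSpace N i b :=
  if hb : b = i then
    iteSpace.inl hb ∘ₗ (LinearMap.range (canOut N b)).mkQ ∘ₗ
      LinearMap.single k (fun p : Σ l, E b l => N.V p.1)
        ⟨a, (reverseArrow (Or.inr hb)).symm e'⟩ ∘ₗ
      iteSpace.snd
  else if ha : a = i then 0
  else iteSpace.inr hb ∘ₗ N.map ((keepArrow ha hb).symm e') ∘ₗ iteSpace.snd

noncomputable def reflMinus (N : QvRep k Q E) (i : Q) : QvRep k Q (revE E i) where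
  V j := reflMinusSpace N i j
  map e' := reflMinusMap N i e'

variable (N : QvRep k Q E) {i : Q}

noncomputable def reflMinusEquivOfNe {j : Q} (hj : j ≠ i) : (reflMinus N i).V j ≃ₗ[k] N.V j :=
  iteSpace.equivOfNeg hj

variable (i) in
noncomputable def reflMinusEquivCoker :
    (reflMinus N i).V i ≃ₗ[k] (∀ p : Σ l, E i l, N.V p.1) ⧸ LinearMap.range (canOut N i) :=
  iteSpace.equivOfPos rfl

open scoped Classical in
theorem reflMinus_map_sink {a : Q} (ha : a ≠ i) (e' : revE E i a i) (v : (reflMinus N i).V a) :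
    reflMinusEquivCoker N i ((reflMinus N i).map e' v) =
      (LinearMap.range (canOut N i)).mkQ
        (Pi.single ⟨a, (reverseArrow (Or.inr rfl)).symm e'⟩ (reflMinusEquivOfNe N ha v)) := by
  show reflMinusEquivCoker N i (reflMinusMap N i e' v) = _
  rw [reflMinusMap, dif_pos rfl]
  rfl

theorem reflMinus_map_of_ne {a b : Q} (ha : a ≠ i) (hb : b ≠ i) (e' : revE E i a b)
    (v : (reflMinus N i).V a) :
    reflMinusEquivOfNe N hb ((reflMinus N i).map e' v) =
      N.map ((keepArrow ha hb).symm e') (reflMinusEquivOfNe N ha v) := by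
  show reflMinusEquivOfNe N hb (reflMinusMap N i e' v) = _
  rw [reflMinusMap, dif_neg hb, dif_neg ha]
  rfl

variable [Fintype Q] [∀ a b, Fintype (E a b)]

theorem finiteDimensional_reflMinus (hN : ∀ q, FiniteDimensional k (N.V q)) (q : Q) :
    FiniteDimensional k ((reflMinus N i).V q) :=
  inferInstanceAs (FiniteDimensional k (reflMinusSpace N i q))

/-- The arrows of `Q'` into `i` are the reversed arrows of `Q` out of `i`; as `i` is a source,
none of them starts at `i`, the one vertex where `Φ⁻N` differs from `N`. -/
noncomputable def sinkFamilyEquiv (hs : ∀ j, IsEmpty (E j i)) :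
    (∀ p : Σ l, revE E i l i, (reflMinus N i).V p.1) ≃ₗ[k] (∀ q : Σ l, E i l, N.V q.1) where
  toFun x q :=
    reflMinusEquivOfNe N (ne_of_source hs q.2) (x ⟨q.1, reverseArrow (Or.inr rfl) q.2⟩)
  invFun f p := (reflMinusEquivOfNe N (ne_of_revE_sink hs p.2)).symm
    (f ⟨p.1, (reverseArrow (Or.inr rfl)).symm p.2⟩)
  map_add' x y := by funext q; simp
  map_smul' c x := by funext q; simp
  left_inv x := by
    funext ⟨j, e'⟩
    dsimp only
    rw [Equiv.apply_symm_apply, LinearEquiv.symm_apply_apply]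
  right_inv f := by
    funext ⟨j, e⟩
    dsimp only
    rw [LinearEquiv.apply_symm_apply, Equiv.symm_apply_apply]

theorem reflMinusEquivCoker_canIn (hs : ∀ j, IsEmpty (E j i))
    (x : ∀ p : Σ l, revE E i l i, (reflMinus N i).V p.1) :
    reflMinusEquivCoker N i (canIn (reflMinus N i) i x) =
      (LinearMap.range (canOut N i)).mkQ (sinkFamilyEquiv N hs x) := by
  classical
  rw [canIn_apply, map_sum,
    Finset.sum_congr rfl fun p _ => reflMinus_map_sink N (ne_of_revE_sink hs p.2) p.2 (x p),
    ← map_sum, ← Finset.univ_sum_single (sinkFamilyEquiv N hs x)]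
  congr 1
  refine Fintype.sum_equiv
    (Equiv.sigmaCongrRight fun _ => (reverseArrow (Or.inr rfl)).symm) _ _ fun ⟨j, e'⟩ => ?_
  change _ = Pi.single (M := fun q : Σ l, E i l => N.V q.1)
    ⟨j, (reverseArrow (Or.inr rfl)).symm e'⟩ (reflMinusEquivOfNe N (ne_of_revE_sink hs e')
    (x ⟨j, reverseArrow (Or.inr rfl) ((reverseArrow (Or.inr rfl)).symm e')⟩))
  rw [Equiv.apply_symm_apply]

theorem canIn_reflMinus_surjective (hs : ∀ j, IsEmpty (E j i)) :
    Function.Surjective (canIn (reflMinus N i) i) := by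
  intro w
  obtain ⟨f, hf⟩ := (LinearMap.range (canOut N i)).mkQ_surjective (reflMinusEquivCoker N i w)
  refine ⟨(sinkFamilyEquiv N hs).symm f, (reflMinusEquivCoker N i).injective ?_⟩
  rw [reflMinusEquivCoker_canIn N hs, LinearEquiv.apply_symm_apply, hf]

theorem mem_ker_canIn_reflMinus_iff (hs : ∀ j, IsEmpty (E j i))
    (x : ∀ p : Σ l, revE E i l i, (reflMinus N i).V p.1) :
    x ∈ LinearMap.ker (canIn (reflMinus N i) i) ↔
      sinkFamilyEquiv N hs x ∈ LinearMap.range (canOut N i) := by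
  rw [LinearMap.mem_ker, ← (reflMinusEquivCoker N i).map_eq_zero_iff, reflMinusEquivCoker_canIn,
    Submodule.mkQ_apply, Submodule.Quotient.mk_eq_zero]

noncomputable def toReflPlusReflMinusSink (hs : ∀ j, IsEmpty (E j i)) :
    N.V i →ₗ[k] (reflPlus (reflMinus N i)).V i :=
  (reflPlusEquivKer _).symm.toLinearMap ∘ₗ
    ((sinkFamilyEquiv N hs).symm.toLinearMap ∘ₗ canOut N i).codRestrict _ fun y =>
      (mem_ker_canIn_reflMinus_iff N hs _).2 (by simp)

noncomputable def toReflPlusReflMinusApp (hs : ∀ j, IsEmpty (E j i)) :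
    ∀ j, N.V j →ₗ[k] (reflPlus (reflMinus N i)).V j :=
  updateAt i
    (fun _ hj => ((reflPlusEquivOfNe _ hj).trans (reflMinusEquivOfNe N hj)).symm.toLinearMap)
    (toReflPlusReflMinusSink N hs)

theorem toReflPlusReflMinusApp_bijective (hs : ∀ j, IsEmpty (E j i))
    (hN : Function.Injective (canOut N i)) (j : Q) :
    Function.Bijective (toReflPlusReflMinusApp N hs j) := by
  by_cases hj : j = i
  · subst hj
    rw [toReflPlusReflMinusApp, updateAt_self]
    refine ⟨fun y y' h => hN ?_, fun w => ?_⟩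
    · simpa [toReflPlusReflMinusSink, Subtype.ext_iff] using h
    · obtain ⟨y, hy⟩ := (mem_ker_canIn_reflMinus_iff N hs _).1 (reflPlusEquivKer _ w).2
      refine ⟨y, (reflPlusEquivKer _).injective (Subtype.ext ?_)⟩
      simp [toReflPlusReflMinusSink, hy]
  · rw [toReflPlusReflMinusApp, updateAt_of_ne hj]
    exact LinearEquiv.bijective _

theorem toReflPlusReflMinusApp_comm (hs : ∀ j, IsEmpty (E j i)) {a b : Q} (e : E a b) :
    toReflPlusReflMinusApp N hs b ∘ₗ N.map e =
      (reflPlus (reflMinus N i)).map e ∘ₗ toReflPlusReflMinusApp N hs a := by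
  have hb := ne_of_source hs e
  ext v
  apply ((reflPlusEquivOfNe _ hb).trans (reflMinusEquivOfNe N hb)).injective
  by_cases ha : a = i
  · subst ha
    simp [toReflPlusReflMinusApp, updateAt_of_ne hb, reflPlus_map_source _ hb,
      toReflPlusReflMinusSink, sinkFamilyEquiv, canOut]
  · simp [toReflPlusReflMinusApp, updateAt_of_ne hb, updateAt_of_ne ha,
      reflPlus_map_of_ne _ ha hb, reflMinus_map_of_ne _ ha hb]

noncomputable def reflPlusReflMinusIso (hs : ∀ j, IsEmpty (E j i))
    (hN : Function.Injective (canOut N i)) : N ≅ reflPlus (reflMinus N i) :=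
  isoOfBijective ⟨toReflPlusReflMinusApp N hs, toReflPlusReflMinusApp_comm N hs⟩
    (toReflPlusReflMinusApp_bijective N hs hN)

end ReflMinus

section Restricted

variable [Fintype Q] [DecidableEq Q] [∀ a b, Fintype (E a b)] {i : Q}

variable (k E i) in
noncomputable def reflPlusRestricted (hs : ∀ j, IsEmpty (E j i)) :
    ObjectProperty.FullSubcategory
        (fun M : QvRep k Q (revE E i) =>
          (∀ q, FiniteDimensional k (M.V q)) ∧ Function.Surjective (canIn M i)) ⥤
      ObjectProperty.FullSubcategory
        (fun N : QvRep k Q E =>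
          (∀ q, FiniteDimensional k (N.V q)) ∧ Function.Injective (canOut N i)) :=
  ObjectProperty.lift _ (ObjectProperty.ι _ ⋙ reflPlusFunctor k E i) fun M =>
    ⟨finiteDimensional_reflPlus M.property.1, canOut_reflPlus_injective hs M.obj⟩

theorem reflPlusRestricted_isEquivalence (hs : ∀ j, IsEmpty (E j i)) :
    (reflPlusRestricted k E i hs).IsEquivalence where
  faithful := ⟨fun {M _} _ _ h => ObjectProperty.hom_ext _ (reflPlusHom_injective hs M.property.2
    (congrArg (fun f => f.hom) h))⟩
  full := ⟨fun {M _} ψ =>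
    let ⟨φ, hφ⟩ := exists_reflPlusHom_eq hs M.property.2 ψ.hom
    ⟨ObjectProperty.homMk φ, ObjectProperty.hom_ext _ hφ⟩⟩
  essSurj := ⟨fun N => ⟨⟨reflMinus N.obj i, finiteDimensional_reflMinus N.obj N.property.1,
    canIn_reflMinus_surjective N.obj hs⟩,
    ⟨ObjectProperty.isoMk _ (reflPlusReflMinusIso N.obj hs N.property.2).symm⟩⟩⟩

end Restricted

end BGP

/-- Let `Q` be a finite quiver with a source `i` and let `Q'` be obtained from
`Q` by reversing all arrows incident to `i` (so `i` is a sink of `Q'`).  The BGP reflection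
functor at `i` induces an equivalence between the full subcategory of finite-dimensional
representations `M` of `Q'` with `⊕_{a : j → i} M_j → M_i` surjective (equivalently
`Hom(M, S_i) = 0`) and the full subcategory of finite-dimensional representations `N` of `Q`
with `N_i → ⊕_{a : i → j} N_j` injective (equivalently `Hom(S_i, N) = 0`); the functor keeps
the spaces away from `i` and replaces the space at `i` by the kernel of the canonical map. -/
theorem bgp_reflection_equivalence
    (k : Type) [Field k] (Q : Type) [Fintype Q] [DecidableEq Q]
    (E : Q → Q → Type) [∀ a b, Fintype (E a b)]
    (i : Q) (hsource : ∀ j : Q, IsEmpty (E j i)) :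
    ∃ Eqv : ObjectProperty.FullSubcategory
          (fun M : QvRep k Q (revE E i) =>
            (∀ q, FiniteDimensional k (M.V q)) ∧ Function.Surjective (canIn M i)) ≌
        ObjectProperty.FullSubcategory
          (fun N : QvRep k Q E =>
            (∀ q, FiniteDimensional k (N.V q)) ∧ Function.Injective (canOut N i)),
      ∀ M, (∀ j, j ≠ i → Nonempty ((Eqv.functor.obj M).obj.V j ≃ₗ[k] M.obj.V j)) ∧
        Nonempty ((Eqv.functor.obj M).obj.V i ≃ₗ[k] LinearMap.ker (canIn M.obj i)) := by
  have := BGP.reflPlusRestricted_isEquivalence hsource (k := k)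
  exact ⟨(BGP.reflPlusRestricted k E i hsource).asEquivalence, fun M =>
    ⟨fun _ hj => ⟨BGP.reflPlusEquivOfNe M.obj hj⟩, ⟨BGP.reflPlusEquivKer M.obj⟩⟩⟩
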